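/- Let g₁ and g₂ be finite-dimensional complex nilpotent Lie algebras with chosen bases containing generator sets of sizes n₁, n₂ ≥ 2. The bilinear map φ : (g₁ ⊕ g₂) × (g₁ ⊕ g₂) → ℂ^(n₁n₂) defined by φ(Xᵢ, X'ⱼ) = e_{(i-1)n₂+j} for generators Xᵢ of g₁ (1 ≤ i ≤ n₁) and X'ⱼ of g₂ (1 ≤ j ≤ n₂), extended antisymmetrically and vanishing on all other pairs of basis vectors, is a 2-cocycle of g₁ ⊕ g₂ with values in the trivial module ℂ^(n₁n₂). -/

import Mathlib

/-!
Let `Φ : g₁ × g₂ → ℂ^(n₁n₂)` be the bilinear map pairing the generators of `g₁` with those of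
`g₂`. Then the cocycle is `φ(x, y) = Φ(x₁, y₂) - Φ(y₁, x₂)`, which is alternating by
construction. Since the bases are adapted, `Φ` vanishes as soon as one argument lies in a
derived algebra, so `φ [x, y] = 0` and every term of the cocycle identity is zero.
-/

open Module

noncomputable section

/-- Direct sum (product) of two Lie rings. -/
instance prodLieRing (L L' : Type*) [LieRing L] [LieRing L'] : LieRing (L × L') where
  bracket p q := (⁅p.1, q.1⁆, ⁅p.2, q.2⁆)
  add_lie x y z := Prod.ext (add_lie x.1 y.1 z.1) (add_lie x.2 y.2 z.2)
  lie_add x y z := Prod.ext (lie_add x.1 y.1 z.1) (lie_add x.2 y.2 z.2)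
  lie_self x := Prod.ext (lie_self x.1) (lie_self x.2)
  leibniz_lie x y z := Prod.ext (leibniz_lie x.1 y.1 z.1) (leibniz_lie x.2 y.2 z.2)

instance prodLieAlgebra (R L L' : Type*) [CommRing R] [LieRing L] [LieRing L']
    [LieAlgebra R L] [LieAlgebra R L'] : LieAlgebra R (L × L') where
  lie_smul t x y := Prod.ext (lie_smul t x.1 y.1) (lie_smul t x.2 y.2)

/-- A Lie algebra is nonsplit if it is not the direct sum of two nonzero ideals. -/
def LieAlgebra.Nonsplit (R L : Type*) [CommRing R] [LieRing L] [LieAlgebra R L] : Prop :=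
  ¬ ∃ I J : LieIdeal R L, I ≠ ⊥ ∧ J ≠ ⊥ ∧ I ⊓ J = ⊥ ∧ I ⊔ J = ⊤

/-- `g` is nonabelian: some bracket is nonzero. -/
def LieAlgebra.Nonabelian (L : Type*) [LieRing L] : Prop := ∃ x y : L, ⁅x, y⁆ ≠ 0

/-- `L` is the product by generators `g1 ×̲ g2`: the central extension of `g1 ⊕ g2`
by `ℂ^(n1 n2)` given by the cocycle pairing the generators of `g1` with those of `g2`. -/
structure IsProductByGenerators
    (L g1 g2 : Type*) [LieRing L] [LieAlgebra ℂ L]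
    [LieRing g1] [LieAlgebra ℂ g1] [LieRing g2] [LieAlgebra ℂ g2] where
  m1 : ℕ
  m2 : ℕ
  n1 : ℕ
  n2 : ℕ
  two_le_n1 : 2 ≤ n1
  two_le_n2 : 2 ≤ n2
  n1_le : n1 ≤ m1
  n2_le : n2 ≤ m2
  /-- an adapted basis of `g1` -/
  b1 : Basis (Fin m1) ℂ g1
  /-- an adapted basis of `g2` -/
  b2 : Basis (Fin m2) ℂ g2
  /-- the first `n1` basis vectors generate `g1` -/
  gen1 : Submodule.span ℂ (⇑b1 '' {i : Fin m1 | (i : ℕ) < n1}) ⊔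
      (LieAlgebra.derivedSeries ℂ g1 1).toSubmodule = ⊤
  gen2 : Submodule.span ℂ (⇑b2 '' {i : Fin m2 | (i : ℕ) < n2}) ⊔
      (LieAlgebra.derivedSeries ℂ g2 1).toSubmodule = ⊤
  /-- the remaining basis vectors span the derived subalgebra -/
  adapted1 : (LieAlgebra.derivedSeries ℂ g1 1).toSubmodule ≤
      Submodule.span ℂ (⇑b1 '' {i : Fin m1 | n1 ≤ (i : ℕ)})
  adapted2 : (LieAlgebra.derivedSeries ℂ g2 1).toSubmodule ≤
      Submodule.span ℂ (⇑b2 '' {i : Fin m2 | n2 ≤ (i : ℕ)})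
  /-- the cocycle, as a bilinear map `g1 × g2 → ℂ^(n1 n2)` -/
  Φ : g1 →ₗ[ℂ] g2 →ₗ[ℂ] (Fin n1 → Fin n2 → ℂ)
  hΦ : ∀ i j, Φ (b1 i) (b2 j) =
      if h : (i : ℕ) < n1 ∧ (j : ℕ) < n2 then
        Pi.single (⟨i, h.1⟩ : Fin n1) (Pi.single (⟨j, h.2⟩ : Fin n2) (1 : ℂ)) else 0
  /-- the underlying linear identification of `L` with `g1 ⊕ g2 ⊕ ℂ^(n1 n2)` -/
  e : (g1 × g2 × (Fin n1 → Fin n2 → ℂ)) ≃ₗ[ℂ] L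
  bracket_eq : ∀ a a' : g1 × g2 × (Fin n1 → Fin n2 → ℂ),
      ⁅e a, e a'⁆ = e (⁅a.1, a'.1⁆, ⁅a.2.1, a'.2.1⁆, Φ a.1 a'.2.1 - Φ a'.1 a.2.1)

namespace IsProductByGenerators

variable {L g1 g2 : Type*} [LieRing L] [LieAlgebra ℂ L]
  [LieRing g1] [LieAlgebra ℂ g1] [LieRing g2] [LieAlgebra ℂ g2]
  (P : IsProductByGenerators L g1 g2)

/-- inclusion of `g1` -/
def ι₁ (x : g1) : L := P.e (x, 0, 0)
/-- inclusion of `g2` -/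
def ι₂ (y : g2) : L := P.e (0, y, 0)
/-- inclusion of the adjoined center `g3 = ℂ^(n1 n2)` -/
def ι₃ (v : Fin P.n1 → Fin P.n2 → ℂ) : L := P.e (0, 0, v)
/-- projection onto `g1` -/
def p₁ (z : L) : g1 := (P.e.symm z).1
/-- projection onto `g2` -/
def p₂ (z : L) : g2 := (P.e.symm z).2.1
/-- projection onto `g3` -/
def p₃ (z : L) : Fin P.n1 → Fin P.n2 → ℂ := (P.e.symm z).2.2

/-- the component `Dᵢⱼ = pᵢ ∘ D ∘ ιⱼ` of an endomorphism of the product. -/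
def D11 (D : L →ₗ[ℂ] L) (x : g1) : g1 := P.p₁ (D (P.ι₁ x))
def D21 (D : L →ₗ[ℂ] L) (x : g1) : g2 := P.p₂ (D (P.ι₁ x))
def D31 (D : L →ₗ[ℂ] L) (x : g1) : Fin P.n1 → Fin P.n2 → ℂ := P.p₃ (D (P.ι₁ x))
def D12 (D : L →ₗ[ℂ] L) (y : g2) : g1 := P.p₁ (D (P.ι₂ y))
def D22 (D : L →ₗ[ℂ] L) (y : g2) : g2 := P.p₂ (D (P.ι₂ y))
def D32 (D : L →ₗ[ℂ] L) (y : g2) : Fin P.n1 → Fin P.n2 → ℂ := P.p₃ (D (P.ι₂ y))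
def D13 (D : L →ₗ[ℂ] L) (v : Fin P.n1 → Fin P.n2 → ℂ) : g1 := P.p₁ (D (P.ι₃ v))
def D23 (D : L →ₗ[ℂ] L) (v : Fin P.n1 → Fin P.n2 → ℂ) : g2 := P.p₂ (D (P.ι₃ v))
def D33 (D : L →ₗ[ℂ] L) (v : Fin P.n1 → Fin P.n2 → ℂ) : Fin P.n1 → Fin P.n2 → ℂ :=
  P.p₃ (D (P.ι₃ v))

end IsProductByGenerators

/-- `IsDerivation D`: `D` satisfies the Leibniz rule. -/
def IsDerivation {L : Type*} [LieRing L] [LieAlgebra ℂ L] (D : L →ₗ[ℂ] L) : Prop :=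
  ∀ x y : L, D ⁅x, y⁆ = ⁅D x, y⁆ + ⁅x, D y⁆

/-- the descending sequence `g^{[k]}`, with `g^{[1]} = Der(g)(g)`,
`g^{[k+1]} = Der(g)(g^{[k]})`. -/
def derPow (g : Type*) [LieRing g] [LieAlgebra ℂ g] : ℕ → Submodule ℂ g
  | 0 => ⊤
  | k + 1 => Submodule.span ℂ
      {x | ∃ D : g →ₗ[ℂ] g, IsDerivation D ∧ ∃ y ∈ derPow g k, x = D y}

/-- characteristically nilpotent: `g^{[m]} = 0` for some `m`. -/
def CharacteristicallyNilpotent (g : Type*) [LieRing g] [LieAlgebra ℂ g] : Prop :=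
  ∃ m, 1 ≤ m ∧ derPow g m = ⊥

/-- An S-algebra: for any Lie algebra `g2` and any derivation `D` of `g1 ×̲ g2`,
the component `D₂₁ = p₂ ∘ D ∘ p₁` maps `g1` into `[g2, g2]`. -/
def IsSAlgebra (g1 : Type) [LieRing g1] [LieAlgebra ℂ g1] : Prop :=
  ∀ (g2 L : Type) (_ : LieRing g2) (_ : LieAlgebra ℂ g2) (_ : LieRing L)
    (_ : LieAlgebra ℂ L) (P : IsProductByGenerators L g1 g2) (D : L →ₗ[ℂ] L),
    IsDerivation D → ∀ x : g1, P.D21 D x ∈ LieAlgebra.derivedSeries ℂ g2 1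

/-- nilpotency index: smallest `k` with `C^k g = 0` (`C¹g = [g,g]`). -/
noncomputable def nilindex (g : Type*) [LieRing g] [LieAlgebra ℂ g] : ℕ :=
  sInf {k | LieModule.lowerCentralSeries ℂ g g k = ⊥}

/-- dimension as complex vector space -/
def fdim (g : Type*) [LieRing g] [LieAlgebra ℂ g] : ℕ := finrank ℂ g

/-- dimension of the center -/
def zdim (g : Type*) [LieRing g] [LieAlgebra ℂ g] : ℕ :=
  finrank ℂ (LieAlgebra.center ℂ g).toSubmodule

/-- dimension of the derived subalgebra `C¹g = [g,g]` -/
def ddim (g : Type*) [LieRing g] [LieAlgebra ℂ g] : ℕ :=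
  finrank ℂ (LieAlgebra.derivedSeries ℂ g 1).toSubmodule

/-- minimal number of generators of a nilpotent Lie algebra: `dim g/[g,g]` -/
def gdim (g : Type*) [LieRing g] [LieAlgebra ℂ g] : ℕ :=
  finrank ℂ (g ⧸ (LieAlgebra.derivedSeries ℂ g 1).toSubmodule)

def FinDim (g : Type*) [LieRing g] [LieAlgebra ℂ g] : Prop := FiniteDimensional ℂ g

/-- existence of a Lie algebra isomorphism -/
def LieIso (L L' : Type*) [LieRing L] [LieAlgebra ℂ L] [LieRing L'] [LieAlgebra ℂ L'] : Prop :=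
  Nonempty (L ≃ₗ⁅ℂ⁆ L')

theorem LieAlgebra.lie_mem_derivedSeries_one (R : Type*) {L : Type*} [CommRing R] [LieRing L]
    [LieAlgebra R L] (x y : L) : ⁅x, y⁆ ∈ LieAlgebra.derivedSeries R L 1 :=
  LieSubmodule.lie_mem_lie (LieSubmodule.mem_top x) (LieSubmodule.mem_top y)

namespace LinearMap

variable {R M₁ M₂ V : Type*} [CommRing R] [AddCommGroup M₁] [Module R M₁]
  [AddCommGroup M₂] [Module R M₂] [AddCommGroup V] [Module R V]

def skewPairing (Φ : M₁ →ₗ[R] M₂ →ₗ[R] V) : (M₁ × M₂) →ₗ[R] (M₁ × M₂) →ₗ[R] V :=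
  Φ.compl₁₂ (fst R M₁ M₂) (snd R M₁ M₂) - (Φ.compl₁₂ (fst R M₁ M₂) (snd R M₁ M₂)).flip

@[simp]
lemma skewPairing_apply (Φ : M₁ →ₗ[R] M₂ →ₗ[R] V) (x y : M₁ × M₂) :
    skewPairing Φ x y = Φ x.1 y.2 - Φ y.1 x.2 :=
  rfl

lemma skewPairing_self (Φ : M₁ →ₗ[R] M₂ →ₗ[R] V) (x : M₁ × M₂) : skewPairing Φ x x = 0 :=
  sub_self _

lemma skewPairing_lie_eq_zero {L₁ L₂ : Type*} [LieRing L₁] [LieAlgebra R L₁]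
    [LieRing L₂] [LieAlgebra R L₂] (Φ : L₁ →ₗ[R] L₂ →ₗ[R] V)
    (h₁ : ∀ d ∈ LieAlgebra.derivedSeries R L₁ 1, Φ d = 0)
    (h₂ : ∀ d ∈ LieAlgebra.derivedSeries R L₂ 1, Φ.flip d = 0) (x y : L₁ × L₂) :
    skewPairing Φ ⁅x, y⁆ = 0 := by
  refine LinearMap.ext fun z => ?_
  have hx : Φ ⁅x.1, y.1⁆ z.2 = 0 := by
    rw [h₁ _ (LieAlgebra.lie_mem_derivedSeries_one R x.1 y.1), zero_apply]
  have hy : Φ z.1 ⁅x.2, y.2⁆ = 0 := by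
    rw [← flip_apply, h₂ _ (LieAlgebra.lie_mem_derivedSeries_one R x.2 y.2), zero_apply]
  change Φ ⁅x.1, y.1⁆ z.2 - Φ z.1 ⁅x.2, y.2⁆ = 0
  rw [hx, hy, sub_zero]

variable {m₁ m₂ : ℕ}

def generatorPairing (n₁ n₂ : ℕ) (b₁ : Basis (Fin m₁) R M₁) (b₂ : Basis (Fin m₂) R M₂) :
    M₁ →ₗ[R] M₂ →ₗ[R] (Fin n₁ → Fin n₂ → R) :=
  b₁.constr R fun i => b₂.constr R fun j =>
    if h : (i : ℕ) < n₁ ∧ (j : ℕ) < n₂ then Pi.single ⟨i, h.1⟩ (Pi.single ⟨j, h.2⟩ 1) else 0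

variable {n₁ n₂ : ℕ} {b₁ : Basis (Fin m₁) R M₁} {b₂ : Basis (Fin m₂) R M₂}

lemma generatorPairing_basis_basis (i : Fin m₁) (j : Fin m₂) :
    generatorPairing n₁ n₂ b₁ b₂ (b₁ i) (b₂ j) =
      if h : (i : ℕ) < n₁ ∧ (j : ℕ) < n₂ then Pi.single ⟨i, h.1⟩ (Pi.single ⟨j, h.2⟩ 1)
      else 0 := by
  simp only [generatorPairing, Basis.constr_basis]

lemma generatorPairing_eq_zero_of_mem_span_left {x : M₁}
    (hx : x ∈ Submodule.span R (b₁ '' {i | n₁ ≤ (i : ℕ)})) :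
    generatorPairing n₁ n₂ b₁ b₂ x = 0 := by
  refine LinearMap.eqOn_span (g := 0) ?_ hx
  rintro _ ⟨i, hi : n₁ ≤ (i : ℕ), rfl⟩
  exact b₂.ext fun j => by simp [generatorPairing_basis_basis, hi.not_gt]

lemma generatorPairing_eq_zero_of_mem_span_right {y : M₂}
    (hy : y ∈ Submodule.span R (b₂ '' {j | n₂ ≤ (j : ℕ)})) :
    (generatorPairing n₁ n₂ b₁ b₂).flip y = 0 := by
  refine LinearMap.eqOn_span (g := 0) ?_ hy
  rintro _ ⟨j, hj : n₂ ≤ (j : ℕ), rfl⟩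
  exact b₁.ext fun i => by simp [generatorPairing_basis_basis, hj.not_gt]

end LinearMap

theorem statement_0 (g1 g2 : Type) [LieRing g1] [LieAlgebra ℂ g1] [LieRing g2] [LieAlgebra ℂ g2]
    (m1 m2 n1 n2 : ℕ)
    (b1 : Basis (Fin m1) ℂ g1) (b2 : Basis (Fin m2) ℂ g2)
    -- the bases are adapted: remaining basis vectors span the derived algebras
    (adapted1 : (LieAlgebra.derivedSeries ℂ g1 1).toSubmodule ≤
      Submodule.span ℂ (⇑b1 '' {i : Fin m1 | n1 ≤ (i : ℕ)}))
    (adapted2 : (LieAlgebra.derivedSeries ℂ g2 1).toSubmodule ≤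
      Submodule.span ℂ (⇑b2 '' {i : Fin m2 | n2 ≤ (i : ℕ)}))
    -- `φ` is the bilinear extension of `φ(Xᵢ, X'ⱼ) = e_{(i-1)n2 + j}` on generator pairs,
    -- zero on other pairs of basis vectors, extended antisymmetrically
    (φ : (g1 × g2) →ₗ[ℂ] (g1 × g2) →ₗ[ℂ] (Fin n1 → Fin n2 → ℂ))
    (hφ : φ = (b1.prod b2).constr ℂ fun p =>
      match p with
      | Sum.inl i => (b1.prod b2).constr ℂ fun q =>
          match q with
          | Sum.inl _ => 0
          | Sum.inr j =>
              if h : (i : ℕ) < n1 ∧ (j : ℕ) < n2 then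
                Pi.single (⟨i, h.1⟩ : Fin n1) (Pi.single (⟨j, h.2⟩ : Fin n2) (1 : ℂ)) else 0
      | Sum.inr j => (b1.prod b2).constr ℂ fun q =>
          match q with
          | Sum.inl i =>
              if h : (i : ℕ) < n1 ∧ (j : ℕ) < n2 then
                - Pi.single (⟨i, h.1⟩ : Fin n1) (Pi.single (⟨j, h.2⟩ : Fin n2) (1 : ℂ)) else 0
          | Sum.inr _ => 0) :
    -- `φ` is an alternating 2-cocycle for the trivial module `ℂ^(n1 n2)`
    (∀ x : g1 × g2, φ x x = 0) ∧
    (∀ x y z : g1 × g2, φ ⁅x, y⁆ z + φ ⁅y, z⁆ x + φ ⁅z, x⁆ y = 0) := by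
  have hφ' : φ = LinearMap.skewPairing (LinearMap.generatorPairing n1 n2 b1 b2) := by
    subst hφ
    refine (b1.prod b2).ext fun p => (b1.prod b2).ext fun q => ?_
    rcases p with i | j <;> rcases q with i' | j' <;>
      simp only [Basis.constr_basis, LinearMap.skewPairing_apply, Basis.prod_apply_inl_fst,
        Basis.prod_apply_inl_snd, Basis.prod_apply_inr_fst, Basis.prod_apply_inr_snd, map_zero,
        LinearMap.zero_apply, LinearMap.generatorPairing_basis_basis, sub_zero, zero_sub, sub_self]
    split_ifs <;> simp
  subst hφ'
  refine ⟨LinearMap.skewPairing_self _, fun x y z => ?_⟩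
  have hlie := LinearMap.skewPairing_lie_eq_zero (LinearMap.generatorPairing n1 n2 b1 b2)
    (fun _ hd => LinearMap.generatorPairing_eq_zero_of_mem_span_left (adapted1 hd))
    (fun _ hd => LinearMap.generatorPairing_eq_zero_of_mem_span_right (adapted2 hd))
  simp only [hlie, LinearMap.zero_apply, add_zero]
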